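/- arXiv:1610.04558 — 2 statements merged into one kernel-verified Lean document; each statement's English description precedes it below -/
import Mathlib

section
/- Let K^• be the s-th (stupid, from below) truncation of a combinatorial n-cube complex, i.e., the full subcomplex on vertices of {0,1}^n whose coordinate sum is at least s, with 0 < s ≤ n. Then the cohomology of K^• in its lowest degree has dimension binomial(n-1, s-1) over k, and all higher cohomology groups vanish. -/
/-!
Extended by zero, the terms of the cube complex assemble into the functions on all of
`Finset α`, on which the differential is `F ↦ F ᵥ* C` for the matrix `C = (c S T)`; `d² = 0`
becomes `C * C = 0`, which forces every square face of the cube to anticommute. Fixing a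
coordinate `z`, the matrix `K` with entry `c(S, S ∪ {z})⁻¹` at `(S ∪ {z}, S)` for `S ∌ z`
satisfies `K * C + C * K = 1`, so the full cube complex is exact everywhere, `d 0` included.
Hence truncation only leaves `ker (d s)` as cohomology, and rank–nullity with Pascal's rule
gives `dim ker (d (p + 1)) = (n - 1).choose p`.
-/

theorem finrank_ker_succ_eq_choose {K : Type*} [DivisionRing K] {V : ℕ → Type*}
    [∀ p, AddCommGroup (V p)] [∀ p, Module K (V p)] [∀ p, FiniteDimensional K (V p)]
    (d : ∀ p, V p →ₗ[K] V (p + 1)) {m : ℕ}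
    (hdim : ∀ p, Module.finrank K (V p) = (m + 1).choose p)
    (h0 : LinearMap.ker (d 0) = ⊥)
    (hexact : ∀ p, LinearMap.ker (d (p + 1)) = LinearMap.range (d p)) (p : ℕ) :
    Module.finrank K (LinearMap.ker (d (p + 1))) = m.choose p := by
  have hrank := fun p => (d p).finrank_range_add_finrank_ker
  induction p with
  | zero =>
    have := hrank 0
    rw [h0, finrank_bot, hdim, Nat.choose_zero_right] at this
    rw [hexact, Nat.choose_zero_right]
    omega
  | succ q ih =>
    have := hrank (q + 1)
    rw [ih, hdim, Nat.choose_succ_succ', ← hexact] at this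
    omega

namespace CubeComplex

open Finset Matrix

variable {k α : Type*} [Field k] {c : Finset α → Finset α → k}

def IsEdgeWeight (c : Finset α → Finset α → k) : Prop :=
  ∀ S T, c S T ≠ 0 ↔ (S ⊆ T ∧ T.card = S.card + 1)

section DecidableEq

variable [DecidableEq α]

theorem IsEdgeWeight.apply_insert_ne_zero (hc : IsEdgeWeight c) {S : Finset α} {a : α}
    (ha : a ∉ S) : c S (insert a S) ≠ 0 :=
  (hc _ _).mpr ⟨subset_insert a S, card_insert_of_notMem ha⟩

theorem IsEdgeWeight.exists_insert_of_ne_zero (hc : IsEdgeWeight c) {S T : Finset α}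
    (h : c S T ≠ 0) : ∃ a ∉ S, insert a S = T :=
  exists_eq_insert_iff.mpr (by grind [(hc S T).mp h])

theorem eq_insert_or_eq_insert_of_insert_subset {S : Finset α} {a b x : α} (hx : x ∉ S)
    (h : insert x S ⊆ insert a (insert b S)) :
    insert x S = insert a S ∨ insert x S = insert b S := by
  have := h (mem_insert_self x S)
  grind

end DecidableEq

variable [Fintype α]

def HasEntries (d : ∀ p : ℕ, ({S : Finset α // S.card = p} → k) →ₗ[k]
      ({S : Finset α // S.card = p + 1} → k)) (c : Finset α → Finset α → k) : Prop :=
  ∀ (p : ℕ) (f : {S : Finset α // S.card = p} → k) (T : {S : Finset α // S.card = p + 1}),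
    d p f T = ∑ S : {S : Finset α // S.card = p}, c S.1 T.1 * f S

variable {d : ∀ p : ℕ, ({S : Finset α // S.card = p} → k) →ₗ[k]
  ({S : Finset α // S.card = p + 1} → k)}

theorem HasEntries.apply_comp_val (hd : HasEntries d c) (hc : IsEdgeWeight c) {p : ℕ}
    (F : Finset α → k) (T : {S : Finset α // S.card = p + 1}) :
    d p (fun S => F S.1) T = (F ᵥ* of c) T.1 := by
  rw [hd]
  simp only [vecMul, dotProduct, of_apply]
  have hrest : ∑ S : {S : Finset α // ¬S.card = p}, F S * c S T = 0 := by
    refine Fintype.sum_eq_zero _ fun S => ?_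
    suffices c S T = 0 by rw [this, mul_zero]
    exact not_ne_iff.mp fun h => S.2 (by grind [(hc S T).mp h, T.2])
  rw [← Fintype.sum_subtype_add_sum_subtype (fun S : Finset α => S.card = p)
    (fun S => F S * c S T), hrest, add_zero]
  exact sum_congr rfl fun S _ => mul_comm _ _

theorem HasEntries.vecMul_extend_eq_zero (hd : HasEntries d c) (hc : IsEdgeWeight c) {p : ℕ}
    {g : {S : Finset α // S.card = p} → k} (hg : d p g = 0) :
    (fun S => if h : S.card = p then g ⟨S, h⟩ else 0) ᵥ* of c = 0 := by
  set G : Finset α → k := fun S => if h : S.card = p then g ⟨S, h⟩ else 0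
  funext U
  by_cases hU : U.card = p + 1
  · have hG : (fun S : {S : Finset α // S.card = p} => G S.1) = g := funext fun S => dif_pos S.2
    rw [← hd.apply_comp_val hc G ⟨U, hU⟩, hG, hg]
    rfl
  · refine Fintype.sum_eq_zero _ fun S => show G S * c S U = 0 from ?_
    by_cases hS : S.card = p
    · suffices c S U = 0 by rw [this, mul_zero]
      exact not_ne_iff.mp fun h => hU (by grind [(hc S U).mp h])
    · rw [show G S = 0 from dif_neg hS, zero_mul]

variable [DecidableEq α]

theorem HasEntries.of_mul_of_eq_zero (hd : HasEntries d c) (hc : IsEdgeWeight c)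
    (hdd : ∀ p : ℕ, d (p + 1) ∘ₗ d p = 0) : of c * of c = 0 := by
  ext S U
  by_cases hU : U.card = S.card + 1 + 1
  · set e : Finset α → k := Pi.single S 1
    calc (of c * of c) S U = (e ᵥ* of c ᵥ* of c) U := by
          rw [vecMul_vecMul, single_one_vecMul]; rfl
      _ = d (S.card + 1) (fun R => (e ᵥ* of c) R.1) ⟨U, hU⟩ :=
          (hd.apply_comp_val hc (e ᵥ* of c) ⟨U, hU⟩).symm
      _ = d (S.card + 1) (d S.card fun R => e R.1) ⟨U, hU⟩ := by
          rw [funext fun R => hd.apply_comp_val hc e R]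
      _ = 0 := by rw [← LinearMap.comp_apply, hdd]; rfl
  · refine sum_eq_zero fun R _ => not_ne_iff.mp fun h => hU ?_
    obtain ⟨hSR, hRU⟩ := mul_ne_zero_iff.mp h
    grind [(hc _ _).mp hSR, (hc _ _).mp hRU]

theorem IsEdgeWeight.square (hc : IsEdgeWeight c) (hcc : of c * of c = 0)
    {S : Finset α} {a b : α} (ha : a ∉ S) (hab : a ≠ b) :
    c S (insert a S) * c (insert a S) (insert a (insert b S)) +
      c S (insert b S) * c (insert b S) (insert a (insert b S)) = 0 := by
  have hpaths := congrFun₂ hcc S (insert a (insert b S))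
  rw [mul_apply, Matrix.zero_apply, Fintype.sum_eq_add (insert a S) (insert b S)] at hpaths
  · exact hpaths
  · exact fun h => hab ((insert_inj ha).mp h)
  rintro R ⟨hRa, hRb⟩
  by_contra hne
  obtain ⟨hSR, hRU⟩ := mul_ne_zero_iff.mp hne
  obtain ⟨x, hx, rfl⟩ := hc.exists_insert_of_ne_zero hSR
  rcases eq_insert_or_eq_insert_of_insert_subset hx ((hc _ _).mp hRU).1 with h | h
  exacts [hRa h, hRb h]

def homotopy (c : Finset α → Finset α → k) (z : α) : Matrix (Finset α) (Finset α) k :=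
  of fun R S => if z ∉ S ∧ R = insert z S then (c S R)⁻¹ else 0

theorem homotopy_mul_apply (z : α) (R T : Finset α) :
    (homotopy c z * of c) R T =
      if z ∈ R then (c (R.erase z) R)⁻¹ * c (R.erase z) T else 0 := by
  rw [mul_apply]
  split_ifs with hR
  · rw [Fintype.sum_eq_single (R.erase z)]
    · simp [homotopy, insert_erase hR]
    · intro S hS
      simp only [homotopy, of_apply, ite_mul, zero_mul]
      exact if_neg fun ⟨hzS, hRS⟩ => hS (hRS ▸ erase_insert hzS).symm
  · refine sum_eq_zero fun S _ => ?_
    simp only [homotopy, of_apply, ite_mul, zero_mul]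
    exact if_neg fun ⟨_, hRS⟩ => hR (hRS ▸ mem_insert_self z S)

theorem mul_homotopy_apply (z : α) (R T : Finset α) :
    (of c * homotopy c z) R T =
      if z ∉ T then c R (insert z T) * (c T (insert z T))⁻¹ else 0 := by
  simp [mul_apply, homotopy, ite_and]

theorem IsEdgeWeight.inv_mul_add_mul_inv_eq_zero (hc : IsEdgeWeight c) (hcc : of c * of c = 0)
    {S T : Finset α} {z : α} (hzS : z ∉ S) (hzT : z ∉ T) :
    (c S (insert z S))⁻¹ * c S T +
      c (insert z S) (insert z T) * (c T (insert z T))⁻¹ = 0 := by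
  have hcS := hc.apply_insert_ne_zero hzS
  have hcT := hc.apply_insert_ne_zero hzT
  by_cases hST : c S T = 0
  · suffices c (insert z S) (insert z T) = 0 by rw [hST, this]; simp
    by_contra hne
    obtain ⟨hsub, hcard⟩ := (hc _ _).mp hne
    refine (hc S T).mpr ⟨?_, ?_⟩ hST
    · simpa [erase_insert hzS, erase_insert hzT] using erase_subset_erase z hsub
    · rw [card_insert_of_notMem hzS, card_insert_of_notMem hzT] at hcard
      omega
  · obtain ⟨t, -, rfl⟩ := hc.exists_insert_of_ne_zero hST
    have hsq := hc.square hcc hzS fun h => hzT (h ▸ mem_insert_self t S)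
    field_simp
    linear_combination hsq

theorem IsEdgeWeight.homotopy_mul_add_mul_homotopy (hc : IsEdgeWeight c) (hcc : of c * of c = 0)
    (z : α) : homotopy c z * of c + of c * homotopy c z = 1 := by
  ext R T
  rw [Matrix.add_apply, homotopy_mul_apply, mul_homotopy_apply, one_apply]
  by_cases hR : z ∈ R <;> by_cases hT : z ∈ T
  · have hcR := hc.apply_insert_ne_zero (notMem_erase z R)
    rw [insert_erase hR] at hcR
    simp only [hR, hT, if_true, not_true, if_false, add_zero]
    split_ifs with hRT
    · rw [hRT, inv_mul_cancel₀ (hRT ▸ hcR)]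
    · suffices c (R.erase z) T = 0 by rw [this, mul_zero]
      by_contra hne
      obtain ⟨a, -, rfl⟩ := hc.exists_insert_of_ne_zero hne
      obtain rfl := (mem_insert.mp hT).resolve_right (notMem_erase z R)
      exact hRT (insert_erase hR).symm
  · obtain ⟨S, hzS, rfl⟩ : ∃ S, z ∉ S ∧ R = insert z S :=
      ⟨R.erase z, notMem_erase z R, (insert_erase hR).symm⟩
    have hRT : insert z S ≠ T := fun h => hT (h ▸ mem_insert_self z S)
    simp only [hR, hT, if_true, not_false_eq_true, if_neg hRT, erase_insert hzS]
    exact hc.inv_mul_add_mul_inv_eq_zero hcc hzS hT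
  · simp only [hR, hT, if_false, not_true, add_zero]
    exact (if_neg fun h : R = T => hR (h ▸ hT)).symm
  · simp only [hR, hT, if_false, not_false_eq_true, if_true, zero_add]
    have hcT := hc.apply_insert_ne_zero hT
    split_ifs with hRT
    · rw [hRT, mul_inv_cancel₀ hcT]
    · suffices c R (insert z T) = 0 by rw [this, zero_mul]
      by_contra hne
      obtain ⟨a, -, he⟩ := hc.exists_insert_of_ne_zero hne
      have hz : z ∈ insert a R := he ▸ mem_insert_self z T
      obtain rfl := (mem_insert.mp hz).resolve_right hR
      exact hRT (by rw [← erase_insert hR, he, erase_insert hT])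

theorem IsEdgeWeight.vecMul_homotopy_vecMul (hc : IsEdgeWeight c) (hcc : of c * of c = 0)
    (z : α) {G : Finset α → k} (hG : G ᵥ* of c = 0) : G ᵥ* homotopy c z ᵥ* of c = G := by
  calc G ᵥ* homotopy c z ᵥ* of c
      = G ᵥ* (homotopy c z * of c + of c * homotopy c z) := by
        rw [vecMul_add, ← vecMul_vecMul G (of c), hG, zero_vecMul, add_zero, vecMul_vecMul]
    _ = G := by rw [hc.homotopy_mul_add_mul_homotopy hcc, vecMul_one]

theorem HasEntries.ker_succ_le_range (hd : HasEntries d c) (hc : IsEdgeWeight c)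
    (hcc : of c * of c = 0) (z : α) (p : ℕ) :
    LinearMap.ker (d (p + 1)) ≤ LinearMap.range (d p) := by
  intro g hg
  set G : Finset α → k := fun S => if h : S.card = p + 1 then g ⟨S, h⟩ else 0
  refine ⟨fun S => (G ᵥ* homotopy c z) S.1, funext fun T => ?_⟩
  rw [hd.apply_comp_val hc, hc.vecMul_homotopy_vecMul hcc z (hd.vecMul_extend_eq_zero hc hg)]
  exact dif_pos T.2

theorem HasEntries.ker_zero_eq_bot (hd : HasEntries d c) (hc : IsEdgeWeight c)
    (hcc : of c * of c = 0) (z : α) : LinearMap.ker (d 0) = ⊥ := by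
  refine (Submodule.eq_bot_iff _).mpr fun g hg => funext fun S => ?_
  have hG := congrFun (hc.vecMul_homotopy_vecMul hcc z (hd.vecMul_extend_eq_zero hc hg)) S.1
  rw [dif_pos S.2] at hG
  rw [Pi.zero_apply, ← hG]
  -- no edge of the cube ends at the empty set
  refine sum_eq_zero fun R _ => mul_eq_zero_of_right _ (not_ne_iff.mp fun h => ?_)
  grind [(hc R S).mp h, S.2]

end CubeComplex

theorem truncated_cube_cohomology_general (k : Type*) [Field k]
    (n s : ℕ) (hs : 0 < s) (hsn : s ≤ n)
    (c : Finset (Fin n) → Finset (Fin n) → k)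
    (hc : ∀ S T : Finset (Fin n), c S T ≠ 0 ↔ (S ⊆ T ∧ T.card = S.card + 1))
    (d : ∀ p : ℕ, ({S : Finset (Fin n) // S.card = p} → k) →ₗ[k]
      ({S : Finset (Fin n) // S.card = p + 1} → k))
    (hd : ∀ (p : ℕ) (f : {S : Finset (Fin n) // S.card = p} → k)
      (T : {S : Finset (Fin n) // S.card = p + 1}),
      d p f T = ∑ S : {S : Finset (Fin n) // S.card = p}, c S.1 T.1 * f S)
    (hdd : ∀ p : ℕ, (d (p + 1)) ∘ₗ (d p) = 0) :
    Module.finrank k (LinearMap.ker (d s)) = Nat.choose (n - 1) (s - 1) ∧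
    ∀ p : ℕ, s ≤ p → LinearMap.ker (d (p + 1)) = LinearMap.range (d p) := by
  have hc' : CubeComplex.IsEdgeWeight c := hc
  have hd' : CubeComplex.HasEntries d c := hd
  have hcc := hd'.of_mul_of_eq_zero hc' hdd
  obtain ⟨m, rfl⟩ : ∃ m, n = m + 1 := ⟨n - 1, by omega⟩
  have hexact : ∀ p, LinearMap.ker (d (p + 1)) = LinearMap.range (d p) := fun p =>
    le_antisymm (hd'.ker_succ_le_range hc' hcc 0 p) (LinearMap.range_le_ker_iff.mpr (hdd p))
  refine ⟨?_, fun p _ => hexact p⟩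
  obtain ⟨t, rfl⟩ : ∃ t, s = t + 1 := ⟨s - 1, by omega⟩
  simpa using finrank_ker_succ_eq_choose d
    (fun p => by simp [Fintype.card_finset_len])
    (hd'.ker_zero_eq_bot hc' hcc 0) hexact t

theorem truncated_cube_cohomology (k : Type*) [Field k] [CharZero k]
    (n s : ℕ) (hs : 0 < s) (hsn : s ≤ n)
    (c : Finset (Fin n) → Finset (Fin n) → k)
    (hc : ∀ S T : Finset (Fin n), c S T ≠ 0 ↔ (S ⊆ T ∧ T.card = S.card + 1))
    (d : ∀ p : ℕ, ({S : Finset (Fin n) // S.card = p} → k) →ₗ[k]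
      ({S : Finset (Fin n) // S.card = p + 1} → k))
    (hd : ∀ (p : ℕ) (f : {S : Finset (Fin n) // S.card = p} → k)
      (T : {S : Finset (Fin n) // S.card = p + 1}),
      d p f T = ∑ S : {S : Finset (Fin n) // S.card = p}, c S.1 T.1 * f S)
    (hdd : ∀ p : ℕ, (d (p + 1)) ∘ₗ (d p) = 0) :
    Module.finrank k (LinearMap.ker (d s)) = Nat.choose (n - 1) (s - 1) ∧
    ∀ p : ℕ, s ≤ p → LinearMap.ker (d (p + 1)) = LinearMap.range (d p) :=
  truncated_cube_cohomology_general k n s hs hsn c hc d hd hdd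
end

section
/- Let λ be a Young diagram appearing (with nonzero multiplicity) in Λ^w(Sym^2 V) ⊗ Sym^a V for some w, a ≥ 0, i.e., λ ∈ Z_n(w,a) for some admissible shading. Then every main hook of λ has width at least its height (a_i ≥ b_i in Frobenius notation). -/
/-!
STATEMENT 6: If a Young diagram θ appears (with nonzero multiplicity) in
`Λ^w(Sym² V) ⊗ Sym^a V`, i.e. `θ ∈ Z_n(w,a)`: θ has at most `n` rows and is
obtained from a diagram λ of Frobenius shape `(a_1,…,a_l | a_1−1,…,a_l−1)`
(encoded by the arm set `A`, with `2w` boxes, `A.sum = w`) by adding `a` boxes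
with no two in the same column (a horizontal strip), then every main hook of θ
has width at least its height; in Frobenius notation `a_i ≥ b_i`, i.e.
`θ'_i ≤ θ_i` for every diagonal box `(i,i)` of θ.
-/

def hookDiagram (A : Finset ℕ) : Finset (ℕ × ℕ) :=
  A.biUnion (fun a =>
    (({(A.filter (fun x => a < x)).card} : Finset ℕ) ×ˢ
        Finset.Icc (A.filter (fun x => a < x)).card ((A.filter (fun x => a < x)).card + a)) ∪
      ((Finset.Icc ((A.filter (fun x => a < x)).card + 1)
          ((A.filter (fun x => a < x)).card + a - 1)) ×ˢ
        ({(A.filter (fun x => a < x)).card} : Finset ℕ)))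

def rowLen (D : Finset (ℕ × ℕ)) (r : ℕ) : ℕ := (D.filter (fun p => p.1 = r)).card

def extz {n : ℕ} (μ : Fin n → ℕ) : ℕ → ℕ := fun r => if h : r < n then μ ⟨r, h⟩ else 0

namespace ZZaux

def c (A : Finset ℕ) (a : ℕ) : ℕ := (A.filter (fun x => a < x)).card

lemma mem_hookD (A : Finset ℕ) (r j : ℕ) :
    (r, j) ∈ hookDiagram A ↔ ∃ a ∈ A,
      (r = c A a ∧ c A a ≤ j ∧ j ≤ c A a + a) ∨
      (j = c A a ∧ c A a + 1 ≤ r ∧ r ≤ c A a + a - 1) := by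
  simp only [hookDiagram, c, Finset.mem_biUnion, Finset.mem_union, Finset.mem_product,
    Finset.mem_Icc, Finset.mem_singleton]
  constructor
  · rintro ⟨b, hb, h⟩
    exact ⟨b, hb, by tauto⟩
  · rintro ⟨b, hb, h⟩
    exact ⟨b, hb, by tauto⟩

lemma c_lt (A : Finset ℕ) {a a' : ℕ} (ha : a ∈ A) (ha' : a' ∈ A) (h : a < a') :
    c A a' < c A a := by
  apply Finset.card_lt_card
  rw [Finset.ssubset_def]
  constructor
  · intro x hx
    simp only [Finset.mem_filter] at *
    exact ⟨hx.1, h.trans hx.2⟩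
  · intro hsub
    have := hsub (Finset.mem_filter.mpr ⟨ha', h⟩)
    simp only [Finset.mem_filter] at this
    omega

lemma c_add_le (A : Finset ℕ) {a a' : ℕ} (h : a ≤ a') : c A a + a ≤ c A a' + a' := by
  have hsub : A.filter (fun x => a < x) ⊆ A.filter (fun x => a' < x) ∪ (Finset.Ioc a a') := by
    intro x hx
    simp only [Finset.mem_filter, Finset.mem_union, Finset.mem_Ioc] at *
    rcases le_or_gt x a' with h1 | h1
    · exact Or.inr ⟨hx.2, h1⟩
    · exact Or.inl ⟨hx.1, h1⟩
  have h2 := Finset.card_le_card hsub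
  have h3 := Finset.card_union_le (A.filter (fun x => a' < x)) (Finset.Ioc a a')
  have h4 : (Finset.Ioc a a').card = a' - a := by simp
  unfold c
  omega

lemma c_inj (A : Finset ℕ) {a a' : ℕ} (ha : a ∈ A) (ha' : a' ∈ A) (h : c A a = c A a') :
    a = a' := by
  rcases lt_trichotomy a a' with h1 | h1 | h1
  · have := c_lt A ha ha' h1; omega
  · exact h1
  · have := c_lt A ha' ha h1; omega

lemma c_lt_card (A : Finset ℕ) {a : ℕ} (ha : a ∈ A) : c A a < A.card := by
  have hsub : A.filter (fun x => a < x) ⊆ A.erase a := by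
    intro x hx
    simp only [Finset.mem_filter, Finset.mem_erase] at *
    exact ⟨by omega, hx.1⟩
  have h1 := Finset.card_le_card hsub
  have h2 := Finset.card_erase_of_mem ha
  have h3 : 0 < A.card := Finset.card_pos.mpr ⟨a, ha⟩
  unfold c
  omega

lemma c_surj (A : Finset ℕ) {r : ℕ} (hr : r < A.card) : ∃ a ∈ A, c A a = r := by
  have himg : A.image (c A) = Finset.range A.card := by
    apply Finset.eq_of_subset_of_card_le
    · intro x hx
      simp only [Finset.mem_image] at hx
      obtain ⟨b, hb, rfl⟩ := hx
      exact Finset.mem_range.mpr (c_lt_card A hb)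
    · rw [Finset.card_range, Finset.card_image_of_injOn
        (fun x hx y hy hxy => c_inj A hx hy hxy)]
  have : r ∈ A.image (c A) := by rw [himg]; exact Finset.mem_range.mpr hr
  simpa using this

lemma c_surj_gt (A : Finset ℕ) {a r : ℕ} (ha : a ∈ A) (hr : r < c A a) :
    ∃ a' ∈ A, c A a' = r ∧ a < a' := by
  obtain ⟨a', ha', hc⟩ := c_surj A (hr.trans (c_lt_card A ha))
  refine ⟨a', ha', hc, ?_⟩
  rcases lt_trichotomy a a' with h | h | h
  · exact h
  · subst h; omega
  · have := c_lt A ha' ha h; omega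

lemma col_closed (A : Finset ℕ) (h1 : ∀ x ∈ A, 1 ≤ x) {r s j : ℕ}
    (hm : (s, j) ∈ hookDiagram A) (hrs : r ≤ s) : (r, j) ∈ hookDiagram A := by
  rw [mem_hookD] at hm ⊢
  obtain ⟨a, ha, hcase⟩ := hm
  rcases hcase with ⟨hs, hj1, hj2⟩ | ⟨hj, hr1, hr2⟩
  · rcases eq_or_lt_of_le hrs with rfl | hlt
    · exact ⟨a, ha, Or.inl ⟨hs, hj1, hj2⟩⟩
    · obtain ⟨a', ha', hc', haa'⟩ := c_surj_gt A ha (show r < c A a by omega)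
      have hcount := c_add_le A (le_of_lt haa')
      refine ⟨a', ha', Or.inl ⟨hc'.symm, ?_, ?_⟩⟩ <;> omega
  · rcases lt_trichotomy r (c A a) with h | h | h
    · obtain ⟨a', ha', hc', haa'⟩ := c_surj_gt A ha h
      have hcount := c_add_le A (le_of_lt haa')
      refine ⟨a', ha', Or.inl ⟨hc'.symm, ?_, ?_⟩⟩ <;> omega
    · refine ⟨a, ha, Or.inl ⟨h, ?_, ?_⟩⟩ <;> omega
    · refine ⟨a, ha, Or.inr ⟨hj, ?_, ?_⟩⟩ <;> omega

lemma row_closed (A : Finset ℕ) (h1 : ∀ x ∈ A, 1 ≤ x) {r j j' : ℕ}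
    (hm : (r, j) ∈ hookDiagram A) (hj' : j' ≤ j) : (r, j') ∈ hookDiagram A := by
  rw [mem_hookD] at hm ⊢
  obtain ⟨a, ha, hcase⟩ := hm
  have ha1 := h1 a ha
  rcases hcase with ⟨hs, hj1, hj2⟩ | ⟨hj, hr1, hr2⟩
  · rcases lt_or_ge j' (c A a) with h | h
    · obtain ⟨a'', ha'', hc'', haa''⟩ := c_surj_gt A ha h
      have hcount := c_add_le A (le_of_lt haa'')
      refine ⟨a'', ha'', Or.inr ⟨hc''.symm, ?_, ?_⟩⟩ <;> omega
    · refine ⟨a, ha, Or.inl ⟨hs, h, ?_⟩⟩; omega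
  · rcases lt_or_eq_of_le hj' with h | h
    · have h' : j' < c A a := by omega
      obtain ⟨a'', ha'', hc'', haa''⟩ := c_surj_gt A ha h'
      have hcount := c_add_le A (le_of_lt haa'')
      refine ⟨a'', ha'', Or.inr ⟨hc''.symm, ?_, ?_⟩⟩ <;> omega
    · refine ⟨a, ha, Or.inr ⟨?_, hr1, hr2⟩⟩; omega

lemma mem_iff_lt_rowLen (D : Finset (ℕ × ℕ)) (r : ℕ)
    (hcl : ∀ j j', (r, j) ∈ D → j' ≤ j → (r, j') ∈ D) (j : ℕ) :
    (r, j) ∈ D ↔ j < rowLen D r := by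
  set S := (D.filter (fun p => p.1 = r)).image Prod.snd with hS
  have hmem : ∀ k, ((r, k) ∈ D ↔ k ∈ S) := by
    intro k
    simp only [hS, Finset.mem_image, Finset.mem_filter]
    constructor
    · intro h; exact ⟨(r, k), ⟨h, rfl⟩, rfl⟩
    · rintro ⟨⟨p1, p2⟩, ⟨hp, hp1⟩, hp2⟩
      simp only at hp1 hp2
      subst hp1; subst hp2; exact hp
  have hcard : S.card = rowLen D r := by
    rw [hS, rowLen, Finset.card_image_of_injOn]
    rintro ⟨p1, p2⟩ hp ⟨q1, q2⟩ hq h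
    simp only [Finset.coe_filter, Set.mem_setOf_eq] at hp hq
    simp only at h
    simp only [Prod.mk.injEq]
    exact ⟨hp.2.trans hq.2.symm, h⟩
  have hsub : S ⊆ Finset.range S.card := by
    intro k hk
    rw [Finset.mem_range]
    have hss : Finset.range (k + 1) ⊆ S := by
      intro x hx
      rw [Finset.mem_range] at hx
      exact (hmem x).mp (hcl k x ((hmem k).mpr hk) (by omega))
    have := Finset.card_le_card hss
    simp only [Finset.card_range] at this
    omega
  have heq : S = Finset.range S.card :=
    Finset.eq_of_subset_of_card_le hsub (by simp)
  rw [hmem j, ← hcard]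
  constructor
  · intro hj
    exact Finset.mem_range.mp (heq ▸ hj)
  · intro hj
    have h2 : j ∈ Finset.range S.card := Finset.mem_range.mpr hj
    rw [← heq] at h2
    exact h2

lemma rowLen_anti (A : Finset ℕ) (h1 : ∀ x ∈ A, 1 ≤ x) {r s : ℕ} (hrs : r ≤ s) :
    rowLen (hookDiagram A) s ≤ rowLen (hookDiagram A) r := by
  have hc : ∀ t j j', (t, j) ∈ hookDiagram A → j' ≤ j → (t, j') ∈ hookDiagram A :=
    fun t j j' h h' => row_closed A h1 h h'
  by_cases h0 : rowLen (hookDiagram A) s = 0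
  · omega
  · have hb : (s, rowLen (hookDiagram A) s - 1) ∈ hookDiagram A :=
      (mem_iff_lt_rowLen _ s (hc s) _).mpr (by omega)
    have hb2 := col_closed A h1 hb hrs
    have := (mem_iff_lt_rowLen _ r (hc r) _).mp hb2
    omega

lemma lemB (A : Finset ℕ) (h1 : ∀ x ∈ A, 1 ≤ x) {i : ℕ}
    (hi : i < rowLen (hookDiagram A) i) :
    rowLen (hookDiagram A) (rowLen (hookDiagram A) i - 1) ≤ i := by
  have hc : ∀ t j j', (t, j) ∈ hookDiagram A → j' ≤ j → (t, j') ∈ hookDiagram A :=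
    fun t j j' h h' => row_closed A h1 h h'
  have hbox : (i, rowLen (hookDiagram A) i - 1) ∈ hookDiagram A :=
    (mem_iff_lt_rowLen _ i (hc i) _).mpr (by omega)
  rw [mem_hookD] at hbox
  obtain ⟨a, ha, hcase⟩ := hbox
  have ha1 := h1 a ha
  rcases hcase with ⟨hs, hj1, hj2⟩ | ⟨hj, hr1, hr2⟩
  · have hbox2 : (i, c A a + a) ∈ hookDiagram A := by
      rw [mem_hookD]; refine ⟨a, ha, Or.inl ⟨hs, ?_, le_refl _⟩⟩; omega
    have h2 := (mem_iff_lt_rowLen _ i (hc i) _).mp hbox2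
    by_contra hcon
    push_neg at hcon
    have hbox3 : (rowLen (hookDiagram A) i - 1, i) ∈ hookDiagram A :=
      (mem_iff_lt_rowLen _ _ (hc _) _).mpr hcon
    rw [mem_hookD] at hbox3
    obtain ⟨a', ha', hcase'⟩ := hbox3
    have ha1' := h1 a' ha'
    rcases hcase' with ⟨hs', hj1', hj2'⟩ | ⟨hj', hr1', hr2'⟩
    · omega
    · have heq : a' = a := c_inj A ha' ha (by omega)
      subst heq
      omega
  · omega

end ZZaux

theorem arm_ge_leg_in_Z (n w a : ℕ) (A : Finset ℕ) (hA : A ⊆ Finset.Icc 1 n)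
    (hsum : A.sum id = w) (μ : Fin n → ℕ)
    (htot : ∑ r, μ r = 2 * w + a)
    (hmono : ∀ r s : ℕ, r ≤ s → extz μ s ≤ extz μ r)
    (hcontains : ∀ r : ℕ, rowLen (hookDiagram A) r ≤ extz μ r)
    (hstrip : ∀ r : ℕ, extz μ (r + 1) ≤ rowLen (hookDiagram A) r) :
    ∀ i : ℕ, i < extz μ i →
      ((Finset.range n).filter (fun r => i < extz μ r)).card ≤ extz μ i := by
  intro i hi
  have h1 : ∀ x ∈ A, 1 ≤ x := fun x hx => (Finset.mem_Icc.mp (hA hx)).1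
  have key : ∀ m : ℕ, rowLen (hookDiagram A) m ≤ i →
      ((Finset.range n).filter (fun r => i < extz μ r)).card ≤ m + 1 := by
    intro m hLm
    have hsub : (Finset.range n).filter (fun r => i < extz μ r) ⊆ Finset.range (m + 1) := by
      intro r hr
      simp only [Finset.mem_filter, Finset.mem_range] at hr ⊢
      obtain ⟨hrn, hir⟩ := hr
      rcases Nat.eq_zero_or_pos r with rfl | hr0
      · omega
      · have hs := hstrip (r - 1)
        rw [Nat.sub_add_cancel hr0] at hs
        by_contra hcon
        push_neg at hcon
        have hanti : rowLen (hookDiagram A) (r - 1) ≤ rowLen (hookDiagram A) m :=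
          ZZaux.rowLen_anti A h1 (by omega)
        omega
    have := Finset.card_le_card hsub
    rwa [Finset.card_range] at this
  rcases le_or_gt (rowLen (hookDiagram A) i) i with h | h
  · have := key i h
    omega
  · have hB := ZZaux.lemB A h1 h
    have := key _ hB
    have hLi := hcontains i
    omega
end
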